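/- Fix a finite type σ over Ω, countable ordinals ζ and ζ', families (f_ξ)_{ξ<ζ} ⊆ Ω_σ and (f'_ξ)_{ξ<ζ'} ⊆ Ω_σ, and a map q : ζ → ζ'. If f_ξ ≤hp f'_{q(ξ)} for all ξ < ζ, then limsup_{ξ→ζ} f_ξ ≤hp limsup_{ξ→ζ} f'_{q(ξ)}. In particular, if f_ξ ≤hp f for all ξ < ζ, then limsup_{ξ→ζ} f_ξ ≤hp f. -/

import Mathlib

/-!  Framework: finite type structure over Ω = countable ordinals,
     limsup/liminf, transfinite iteration functionals, hereditarily
     positive and hereditarily monotone functionals. -/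

noncomputable section
namespace IterOrd

open Ordinal

theorem omega1_pos : (0 : Ordinal) < ω₁ := Ordinal.omega0_pos.trans Ordinal.omega0_lt_omega_one

/-- `Om` is Ω, the set of countable ordinals (ordinals `< ω₁`). -/
abbrev Om : Type 1 := {o : Ordinal // o < ω₁}

/-- Infimum of a subset of Ω (the minimum for nonempty sets; `0` for `∅`). -/
def infOm (s : Set Om) : Om :=
  ⟨sInf (Subtype.val '' s), by
    rcases (Subtype.val '' s).eq_empty_or_nonempty with h | h
    · rw [h]; simpa using omega1_pos
    · obtain ⟨x, _, he⟩ := csInf_mem h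
      exact he ▸ x.2⟩

/-- Supremum of a subset of Ω.  Whenever the supremum of the set exists in Ω
(in particular for every countable subset, by regularity of `ω₁`) this is the
genuine supremum; otherwise it takes a junk value. -/
def supOm (s : Set Om) : Om :=
  if h : sSup (Subtype.val '' s) < ω₁ then ⟨sSup (Subtype.val '' s), h⟩ else ⟨0, omega1_pos⟩

/-- Finite types over the base type `o` (interpreted as Ω). -/
inductive Ty : Type
  | base : Ty
  | arrow : Ty → Ty → Ty
deriving DecidableEq

/-- The full type structure over Ω: `El base = Ω` and
`El (arrow σ τ)` is the set of all functions `El σ → El τ`. -/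
@[reducible] def El : Ty → Type 1
  | .base => Om
  | .arrow σ τ => El σ → El τ

/-- The order on each `El σ`: the ordinal order at base type, pointwise at arrow types. -/
def Le : (σ : Ty) → El σ → El σ → Prop
  | .base => fun x y => x ≤ y
  | .arrow σ τ => fun f g => ∀ x : El σ, Le τ (f x) (g x)

/-- Suprema, computed pointwise at function types. -/
def supEl : (σ : Ty) → Set (El σ) → El σ
  | .base => supOm
  | .arrow σ τ => fun S (x : El σ) => supEl τ ((fun f : El (.arrow σ τ) => f x) '' S)

/-- Infima, computed pointwise at function types. -/
def infEl : (σ : Ty) → Set (El σ) → El σ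
  | .base => infOm
  | .arrow σ τ => fun S (x : El σ) => infEl τ ((fun f : El (.arrow σ τ) => f x) '' S)

/-- `limsup_{ξ→ζ} f ξ = inf_{γ<ζ} sup_{γ≤ξ<ζ} f ξ`. -/
def limsupEl (σ : Ty) (ζ : Ordinal) (f : ∀ ξ : Ordinal, ξ < ζ → El σ) : El σ :=
  infEl σ {y | ∃ γ, ∃ _ : γ < ζ, y = supEl σ {z | ∃ ξ, ∃ h : ξ < ζ, γ ≤ ξ ∧ z = f ξ h}}

/-- `liminf_{ξ→ζ} f ξ = sup_{γ<ζ} inf_{γ≤ξ<ζ} f ξ`. -/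
def liminfEl (σ : Ty) (ζ : Ordinal) (f : ∀ ξ : Ordinal, ξ < ζ → El σ) : El σ :=
  supEl σ {y | ∃ γ, ∃ _ : γ < ζ, y = infEl σ {z | ∃ ξ, ∃ h : ξ < ζ, γ ≤ ξ ∧ z = f ξ h}}

/-- `limsup` of a ζ-indexed sequence of ordinals. -/
def oLimsup (ζ : Ordinal) (a : Ordinal → Ordinal) : Ordinal :=
  sInf {s | ∃ γ, γ < ζ ∧ s = sSup (a '' {ξ | γ ≤ ξ ∧ ξ < ζ})}

/-- `liminf` of a ζ-indexed sequence of ordinals. -/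
def oLiminf (ζ : Ordinal) (a : Ordinal → Ordinal) : Ordinal :=
  sSup {s | ∃ γ, γ < ζ ∧ s = sInf (a '' {ξ | γ ≤ ξ ∧ ξ < ζ})}

/-- The α-iteration functional of type σ:
`Iter 0 f x = x`, `Iter (α+1) f x = f (Iter α f x)`, and
`Iter μ f x = limsup_{ξ→μ} Iter ξ f x` for limit μ. -/
def Iter (σ : Ty) (α : Ordinal) : (El σ → El σ) → El σ → El σ :=
  Ordinal.limitRecOn (motive := fun _ => (El σ → El σ) → El σ → El σ) α
    (fun _ x => x)
    (fun _ ih f x => f (ih f x))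
    (fun μ _ ih f x => limsupEl σ μ (fun ξ h => ih ξ h f x))

/-- The pair (hereditarily positive, ≤hp), defined simultaneously by recursion on the type.
Every element of `Ω` and of `Ω_{ρ→τ}` with `ρ ≠ τ` is h.p., and `≤hp` there is `≤`;
`f : Ω_{τ→τ}` is h.p. iff it preserves h.p., is inflationary on h.p. arguments and is
monotone (w.r.t. `≤hp`) on h.p. arguments; `f ≤hp f'` on `Ω_{τ→τ}` iff `f x ≤hp f' x`
for every h.p. `x`. -/
def HPaux : (σ : Ty) → (El σ → Prop) × (El σ → El σ → Prop)
  | .base => ⟨fun _ => True, fun x y => x ≤ y⟩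
  | .arrow ρ τ =>
      ⟨fun f =>
        if h : ρ = τ then
          (∀ x, (HPaux ρ).1 x → (HPaux τ).1 (f x)) ∧
          (∀ x, (HPaux ρ).1 x → (HPaux τ).2 (cast (congrArg El h) x) (f x)) ∧
          (∀ x y, (HPaux ρ).1 x → (HPaux ρ).1 y → (HPaux ρ).2 x y → (HPaux τ).2 (f x) (f y))
        else True,
       fun f g =>
        if ρ = τ then ∀ x, (HPaux ρ).1 x → (HPaux τ).2 (f x) (g x)
        else Le (.arrow ρ τ) f g⟩

/-- Hereditarily positive functionals. -/
def Hp (σ : Ty) : El σ → Prop := (HPaux σ).1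

/-- The order `≤hp`. -/
def HpLe (σ : Ty) : El σ → El σ → Prop := (HPaux σ).2

/-- `f =hp g` iff `f ≤hp g` and `g ≤hp f`. -/
def HpEq (σ : Ty) (f g : El σ) : Prop := HpLe σ f g ∧ HpLe σ g f

/-- The pair (hereditarily monotone, ≤ on the hereditarily monotone structure),
by recursion on the type.  `f` is hereditarily monotone iff it maps hereditarily
monotone arguments to hereditarily monotone values, monotonically; the order is
pointwise over hereditarily monotone arguments (i.e. the order of `Ω^mon`). -/
def HMaux : (σ : Ty) → (El σ → Prop) × (El σ → El σ → Prop)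
  | .base => ⟨fun _ => True, fun x y => x ≤ y⟩
  | .arrow σ τ =>
      ⟨fun f =>
        (∀ x, (HMaux σ).1 x → (HMaux τ).1 (f x)) ∧
        (∀ x y, (HMaux σ).1 x → (HMaux σ).1 y → (HMaux σ).2 x y → (HMaux τ).2 (f x) (f y)),
       fun f g => ∀ x, (HMaux σ).1 x → (HMaux τ).2 (f x) (g x)⟩

/-- Hereditarily monotone functionals: the members of the type structure `Ω^mon`. -/
def HM (σ : Ty) : El σ → Prop := (HMaux σ).1

/-- The (pointwise) order of the hereditarily monotone type structure `Ω^mon`. -/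
def LeHM (σ : Ty) : El σ → El σ → Prop := (HMaux σ).2

/-- Equality in the hereditarily monotone type structure `Ω^mon`. -/
def EqHM (σ : Ty) (f g : El σ) : Prop := LeHM σ f g ∧ LeHM σ g f

/-! On `Ω` every countable set has a supremum, since `ω₁` is regular. Hence on the base type a
`limsup` of countable length is monotone in the family and lies below every common upper bound
of it. Suprema and infima are computed pointwise, so `limsup` commutes with evaluation and both
properties pass to every relation on `Ω_{ρ→τ}` of the form "`f x R g x` for all `x` in `D`".
The pointwise order and `≤hp` have this form at every arrow type (for `≤hp` on `Ω_{τ→τ}`,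
`D` is the set of h.p. arguments and `R` is `≤hp`, otherwise `R` is the pointwise order),
so both are handled by induction on the type. -/

universe u

lemma countable_Iio_of_lt_omega_one {ζ : Ordinal.{u}} (hζ : ζ < ω₁) :
    (Set.Iio ζ).Countable := by
  rw [← Cardinal.le_aleph0_iff_set_countable, Cardinal.mk_Iio_ordinal, Cardinal.lift_le_aleph0,
    ← Cardinal.lt_aleph_one_iff, ← Cardinal.lt_ord, Cardinal.ord_aleph]
  exact hζ

lemma le_supOm {s : Set Om} (hs : (Subtype.val '' s).Countable) {a : Om} (ha : a ∈ s) :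
    a ≤ supOm s := by
  have : Countable (Subtype.val '' s) := hs.to_subtype
  have hlt : sSup (Subtype.val '' s) < ω₁ := by
    rw [sSup_eq_iSup']
    exact Ordinal.iSup_lt_omega_one fun ⟨_, ⟨y, _, hy⟩⟩ => hy ▸ y.2
  rw [supOm, dif_pos hlt]
  exact le_csSup bddAbove_of_small (⟨a, ha, rfl⟩ : a.1 ∈ Subtype.val '' s)

lemma supOm_le {s : Set Om} {b : Om} (h : ∀ a ∈ s, a ≤ b) : supOm s ≤ b := by
  rw [supOm]
  split_ifs
  · exact show sSup (Subtype.val '' s) ≤ b.1 from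
      csSup_le' (by rintro _ ⟨a, ha, rfl⟩; exact h a ha)
  · exact zero_le (a := b.1)

lemma infOm_le {s : Set Om} {a : Om} (ha : a ∈ s) : infOm s ≤ a :=
  show sInf (Subtype.val '' s) ≤ a.1 from csInf_le' ⟨a, ha, rfl⟩

lemma le_infOm {s : Set Om} {b : Om} (hs : s.Nonempty) (h : ∀ a ∈ s, b ≤ a) : b ≤ infOm s :=
  show b.1 ≤ sInf (Subtype.val '' s) from
    le_csInf (hs.image _) (by rintro _ ⟨a, ha, rfl⟩; exact h a ha)

lemma infOm_empty_le (a : Om) : infOm ∅ ≤ a := by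
  show sInf (Subtype.val '' ∅) ≤ a.1
  simp

lemma countable_tail_values {ζ : Ordinal.{u}} (hζ : ζ < ω₁) (f : ∀ ξ, ξ < ζ → Om)
    (γ : Ordinal.{u}) :
    (Subtype.val '' {z | ∃ ξ, ∃ h : ξ < ζ, γ ≤ ξ ∧ z = f ξ h}).Countable := by
  have := (countable_Iio_of_lt_omega_one hζ).to_subtype
  refine (Set.countable_range fun ξ : Set.Iio ζ => (f ξ ξ.2).1).mono ?_
  rintro _ ⟨_, ⟨ξ, hξ, -, rfl⟩, rfl⟩
  exact ⟨⟨ξ, hξ⟩, rfl⟩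

lemma limsupEl_zero (σ : Ty) (f : ∀ ξ : Ordinal.{u}, ξ < 0 → El σ) :
    limsupEl σ 0 f = infEl σ ∅ := by
  simp [limsupEl]

lemma limsupEl_base_mono {ζ : Ordinal.{u}} (hζ : ζ < ω₁) {f g : ∀ ξ, ξ < ζ → El .base}
    (h : ∀ ξ hξ, f ξ hξ ≤ g ξ hξ) : limsupEl .base ζ f ≤ limsupEl .base ζ g := by
  rcases eq_zero_or_pos ζ with rfl | hζ0
  · rw [limsupEl_zero, limsupEl_zero]
  simp only [limsupEl, infEl, supEl]
  refine le_infOm ⟨_, 0, hζ0, rfl⟩ ?_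
  rintro _ ⟨γ, hγ, rfl⟩
  refine le_trans (infOm_le ⟨γ, hγ, rfl⟩) (supOm_le ?_)
  rintro _ ⟨ξ, hξ, hγξ, rfl⟩
  exact (h ξ hξ).trans (le_supOm (countable_tail_values hζ g γ) ⟨ξ, hξ, hγξ, rfl⟩)

lemma limsupEl_base_le {ζ : Ordinal.{u}} {f : ∀ ξ, ξ < ζ → El .base} {b : El .base}
    (h : ∀ ξ hξ, f ξ hξ ≤ b) : limsupEl .base ζ f ≤ b := by
  rcases eq_zero_or_pos ζ with rfl | hζ0
  · rw [limsupEl_zero]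
    exact infOm_empty_le b
  simp only [limsupEl, infEl, supEl]
  refine le_trans (infOm_le ⟨0, hζ0, rfl⟩) (supOm_le ?_)
  rintro _ ⟨ξ, hξ, -, rfl⟩
  exact h ξ hξ

lemma limsupEl_arrow_apply {ρ τ : Ty} {ζ : Ordinal.{u}} (f : ∀ ξ, ξ < ζ → El (.arrow ρ τ))
    (x : El ρ) : limsupEl (.arrow ρ τ) ζ f x = limsupEl τ ζ (fun ξ h => f ξ h x) := by
  simp only [limsupEl, infEl, supEl]
  congr 1
  ext y
  simp [Set.image, eq_comm]

structure LimsupCompatible (σ : Ty) (R : El σ → El σ → Prop) : Prop where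
  limsup_le_limsup : ∀ ζ : Ordinal.{u}, ζ < ω₁ → ∀ f g : ∀ ξ, ξ < ζ → El σ,
    (∀ ξ hξ, R (f ξ hξ) (g ξ hξ)) → R (limsupEl σ ζ f) (limsupEl σ ζ g)
  limsup_le : ∀ (ζ : Ordinal.{u}) (f : ∀ ξ, ξ < ζ → El σ) (b : El σ),
    (∀ ξ hξ, R (f ξ hξ) b) → R (limsupEl σ ζ f) b

lemma limsupCompatible_base : LimsupCompatible.{u} .base (· ≤ ·) where
  limsup_le_limsup _ hζ _ _ := limsupEl_base_mono hζ
  limsup_le _ _ _ := limsupEl_base_le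

lemma LimsupCompatible.arrow {ρ τ : Ty} {R : El τ → El τ → Prop}
    (hR : LimsupCompatible.{u} τ R) (D : El ρ → Prop)
    {S : El (.arrow ρ τ) → El (.arrow ρ τ) → Prop} (hS : ∀ f g, S f g ↔ ∀ x, D x → R (f x) (g x)) :
    LimsupCompatible.{u} (.arrow ρ τ) S where
  limsup_le_limsup ζ hζ f g hfg := (hS _ _).2 fun x hx => by
    simpa only [limsupEl_arrow_apply] using
      hR.limsup_le_limsup ζ hζ _ _ fun ξ hξ => (hS _ _).1 (hfg ξ hξ) x hx
  limsup_le ζ f b hfb := (hS _ _).2 fun x hx => by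
    simpa only [limsupEl_arrow_apply] using
      hR.limsup_le ζ _ _ fun ξ hξ => (hS _ _).1 (hfb ξ hξ) x hx

lemma limsupCompatible_le : ∀ σ : Ty, LimsupCompatible.{u} σ (Le σ)
  | .base => limsupCompatible_base
  | .arrow _ τ => (limsupCompatible_le τ).arrow (fun _ => True) fun _ _ => by simp [Le]

lemma hpLe_arrow_self {τ : Ty} {f g : El (.arrow τ τ)} :
    HpLe (.arrow τ τ) f g ↔ ∀ x, Hp τ x → HpLe τ (f x) (g x) := by
  simp [HpLe, HPaux, Hp]

lemma hpLe_arrow_of_ne {ρ τ : Ty} (h : ρ ≠ τ) {f g : El (.arrow ρ τ)} :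
    HpLe (.arrow ρ τ) f g ↔ ∀ x, Le τ (f x) (g x) := by
  simp [HpLe, HPaux, h, Le]

lemma limsupCompatible_hpLe : ∀ σ : Ty, LimsupCompatible.{u} σ (HpLe σ)
  | .base => limsupCompatible_base
  | .arrow ρ τ => by
    by_cases h : ρ = τ
    · subst h
      exact (limsupCompatible_hpLe ρ).arrow (Hp ρ) fun _ _ => hpLe_arrow_self
    · exact (limsupCompatible_le τ).arrow (fun _ => True) fun _ _ => by simp [hpLe_arrow_of_ne h]

theorem limsup_hpLe_limsup_general (σ : Ty) (ζ ζ' : Ordinal) (hζ : ζ < ω₁)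
    (f : ∀ ξ : Ordinal, ξ < ζ → El σ) (f' : ∀ ξ : Ordinal, ξ < ζ' → El σ)
    (q : Ordinal → Ordinal) (hq : ∀ ξ, ξ < ζ → q ξ < ζ') :
    ((∀ ξ (hξ : ξ < ζ), HpLe σ (f ξ hξ) (f' (q ξ) (hq ξ hξ))) →
      HpLe σ (limsupEl σ ζ f) (limsupEl σ ζ (fun ξ hξ => f' (q ξ) (hq ξ hξ)))) ∧
    (∀ g : El σ, (∀ ξ (hξ : ξ < ζ), HpLe σ (f ξ hξ) g) →
      HpLe σ (limsupEl σ ζ f) g) :=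
  ⟨(limsupCompatible_hpLe σ).limsup_le_limsup ζ hζ f _,
    (limsupCompatible_hpLe σ).limsup_le ζ f⟩

/-- If `q : ζ → ζ'` and `f_ξ ≤hp f'_{q(ξ)}` for all `ξ < ζ`, then
`limsup_{ξ→ζ} f_ξ ≤hp limsup_{ξ→ζ} f'_{q(ξ)}`; in particular, if `f_ξ ≤hp f` for all
`ξ < ζ`, then `limsup_{ξ→ζ} f_ξ ≤hp f`. -/
theorem limsup_hpLe_limsup (σ : Ty) (ζ ζ' : Ordinal) (hζ : ζ < ω₁) (hζ' : ζ' < ω₁)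
    (f : ∀ ξ : Ordinal, ξ < ζ → El σ) (f' : ∀ ξ : Ordinal, ξ < ζ' → El σ)
    (q : Ordinal → Ordinal) (hq : ∀ ξ, ξ < ζ → q ξ < ζ') :
    ((∀ ξ (hξ : ξ < ζ), HpLe σ (f ξ hξ) (f' (q ξ) (hq ξ hξ))) →
      HpLe σ (limsupEl σ ζ f) (limsupEl σ ζ (fun ξ hξ => f' (q ξ) (hq ξ hξ)))) ∧
    (∀ g : El σ, (∀ ξ (hξ : ξ < ζ), HpLe σ (f ξ hξ) g) →
      HpLe σ (limsupEl σ ζ f) g) :=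
  limsup_hpLe_limsup_general σ ζ ζ' hζ f f' q hq

end IterOrd
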